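/- Let ρ_0 = σ_0 be a d_0×d_0 density matrix. For s = 1,…,t suppose given: (i) a linear map G_s from d_{s-1}×d_{s-1} matrices to d_s×d_s matrices of Kraus form G_s(X) = ∑_j E_{s,j} X E_{s,j}^* with ∑_j E_{s,j}^* E_{s,j} = I; (ii) a Hermitian d_{s-1}×d_{s-1} matrix R_s with 0 ≤ R_s ≤ I; and (iii) ε_s > 0 with tr(ρ_{s-1} R_s) ≥ 1 − 3ε_s. Define recursively ρ_s = G_s(√R_s ρ_{s-1} √R_s)/tr(ρ_{s-1} R_s) and σ_s = G_s(σ_{s-1}). Then ‖σ_t − ρ_t‖₁ ≤ ∑_{s=1}^{t} (√(24 ε_s) + 6 ε_s). -/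

import Mathlib

open scoped Classical ComplexOrder Matrix

/-- Trace norm of a Hermitian matrix: the sum of the absolute values of its eigenvalues
(defined to be `0` if the matrix is not Hermitian). -/
noncomputable def traceNorm {m : Type*} [Fintype m] [DecidableEq m]
    (A : Matrix m m ℂ) : ℝ :=
  if h : A.IsHermitian then ∑ i, |h.eigenvalues i| else 0

/-- Loewner order on Hermitian matrices: `A ≤ B` iff `B - A` is positive semidefinite. -/
def loewnerLE {m : Type*} [Fintype m] (A B : Matrix m m ℂ) : Prop :=
  (B - A).PosSemidef

/-- The positive semidefinite square root of a positive semidefinite matrix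
(Mathlib's former `Matrix.PosSemidef.sqrt`, removed since; restored with its old definition). -/
noncomputable def Matrix.PosSemidef.sqrt {n 𝕜 : Type*} [Fintype n] [RCLike 𝕜] [DecidableEq n]
    {A : Matrix n n 𝕜} (hA : A.PosSemidef) : Matrix n n 𝕜 :=
  hA.1.eigenvectorUnitary.1 * Matrix.diagonal ((↑) ∘ (√·) ∘ hA.1.eigenvalues) *
    (star hA.1.eigenvectorUnitary : Matrix n n 𝕜)

/-- The map `X ↦ ∑ⱼ Eⱼ X Eⱼ*` of Kraus form. -/
noncomputable def krausMap {m m' J : Type*} [Fintype m] [Fintype J]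
    (E : J → Matrix m' m ℂ) (X : Matrix m m ℂ) : Matrix m' m' ℂ :=
  ∑ j, E j * X * (E j)ᴴ

/-- The sequence `ρ_s`, starting from `ρ₀` and with
`ρ_{s+1} = G_{s+1}(√R_{s+1} ρ_s √R_{s+1}) / tr(ρ_s R_{s+1})`, where `G_{s+1}` is the
Kraus-form map built from the family `E s` (here `R s`, `E s` play the roles of the
paper's `R_{s+1}`, `G_{s+1}`, acting at level `s`). -/
noncomputable def rhoSeq (d : ℕ → ℕ) (J : ℕ → Type) [∀ s, Fintype (J s)]
    (E : ∀ s, J s → Matrix (Fin (d (s + 1))) (Fin (d s)) ℂ)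
    (R : ∀ s, Matrix (Fin (d s)) (Fin (d s)) ℂ)
    (hR : ∀ s, (R s).PosSemidef)
    (ρ0 : Matrix (Fin (d 0)) (Fin (d 0)) ℂ) :
    ∀ s, Matrix (Fin (d s)) (Fin (d s)) ℂ
  | 0 => ρ0
  | s + 1 =>
      krausMap (E s)
        (((rhoSeq d J E R hR ρ0 s * R s).trace)⁻¹ •
          ((hR s).sqrt * rhoSeq d J E R hR ρ0 s * (hR s).sqrt))

/-- The unmeasured sequence `σ_s`, with `σ₀ = ρ₀` and `σ_{s+1} = G_{s+1}(σ_s)`. -/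
noncomputable def sigmaSeq (d : ℕ → ℕ) (J : ℕ → Type) [∀ s, Fintype (J s)]
    (E : ∀ s, J s → Matrix (Fin (d (s + 1))) (Fin (d s)) ℂ)
    (ρ0 : Matrix (Fin (d 0)) (Fin (d 0)) ℂ) :
    ∀ s, Matrix (Fin (d s)) (Fin (d s)) ℂ
  | 0 => ρ0
  | s + 1 => krausMap (E s) (sigmaSeq d J E ρ0 s)

namespace GentleAux
open Matrix

variable {n : Type*} [Fintype n] [DecidableEq n]

lemma trace_nonneg' {A : Matrix n n ℂ} (hA : A.PosSemidef) : 0 ≤ A.trace := by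
  exact hA.trace_nonneg

/-- conjugation of a real diagonal by the eigenvector unitary of a Hermitian matrix -/
noncomputable def cdiag {A : Matrix n n ℂ} (hA : A.IsHermitian) (f : n → ℝ) : Matrix n n ℂ :=
  hA.eigenvectorUnitary.1 * Matrix.diagonal ((↑) ∘ f) *
    (star hA.eigenvectorUnitary : Matrix n n ℂ)

variable {A : Matrix n n ℂ} (hA : A.IsHermitian) (f g : n → ℝ)

lemma sqrt_eq_cdiag {R : Matrix n n ℂ} (hR : R.PosSemidef) :
    hR.sqrt = cdiag hR.1 (Real.sqrt ∘ hR.1.eigenvalues) := rfl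

lemma cdiag_eigenvalues : cdiag hA hA.eigenvalues = A := by
  rw [cdiag]
  exact hA.spectral_theorem.symm

lemma cdiag_mul : cdiag hA f * cdiag hA g = cdiag hA (f * g) := by
  have h1 : (star hA.eigenvectorUnitary : Matrix n n ℂ) * hA.eigenvectorUnitary.1 = 1 :=
    (Matrix.mem_unitaryGroup_iff').mp hA.eigenvectorUnitary.2
  have h2 : (fun i => (((↑) ∘ f : n → ℂ)) i * (((↑) ∘ g : n → ℂ)) i) = ((↑) ∘ (f * g) : n → ℂ) := by
    funext i; simp
  rw [cdiag, cdiag, cdiag]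
  rw [show ∀ (U D1 V D2 : Matrix n n ℂ), U * D1 * V * (U * D2 * V) = U * (D1 * (V * U) * D2) * V
    from fun U D1 V D2 => by noncomm_ring]
  rw [h1, mul_one, Matrix.diagonal_mul_diagonal, h2]

lemma cdiag_add : cdiag hA f + cdiag hA g = cdiag hA (f + g) := by
  have h2 : (fun i => (((↑) ∘ f : n → ℂ)) i + (((↑) ∘ g : n → ℂ)) i) = ((↑) ∘ (f + g) : n → ℂ) := by
    funext i; simp
  simp only [cdiag, ← Matrix.add_mul, ← Matrix.mul_add, Matrix.diagonal_add, h2]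

lemma cdiag_sub : cdiag hA f - cdiag hA g = cdiag hA (f - g) := by
  have h2 : (fun i => (((↑) ∘ f : n → ℂ)) i - (((↑) ∘ g : n → ℂ)) i) = ((↑) ∘ (f - g) : n → ℂ) := by
    funext i; simp
  simp only [cdiag, ← Matrix.sub_mul, ← Matrix.mul_sub, Matrix.diagonal_sub, h2]

lemma cdiag_one : cdiag hA 1 = 1 := by
  have h2 : ((↑) ∘ (1 : n → ℝ) : n → ℂ) = 1 := by funext i; simp
  have h3 : Matrix.diagonal (1 : n → ℂ) = 1 := Matrix.diagonal_one
  rw [cdiag, h2, h3, mul_one]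
  exact (Matrix.mem_unitaryGroup_iff).mp hA.eigenvectorUnitary.2

lemma cdiag_conjTranspose : (cdiag hA f)ᴴ = cdiag hA f := by
  have hf2 : star ((↑) ∘ f : n → ℂ) = ((↑) ∘ f : n → ℂ) := by
    funext i
    show star ((f i : ℂ)) = ((f i : ℂ))
    simp [Complex.star_def, Complex.conj_ofReal]
  have hD : star (Matrix.diagonal ((↑) ∘ f) : Matrix n n ℂ) = Matrix.diagonal ((↑) ∘ f) := by
    rw [Matrix.star_eq_conjTranspose, Matrix.diagonal_conjTranspose, hf2]
  rw [cdiag, ← Matrix.star_eq_conjTranspose, StarMul.star_mul, StarMul.star_mul, star_star, hD, mul_assoc]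

lemma cdiag_isHermitian : (cdiag hA f).IsHermitian := cdiag_conjTranspose hA f

lemma cdiag_posSemidef (hf : ∀ i, 0 ≤ f i) : (cdiag hA f).PosSemidef := by
  apply Matrix.PosSemidef.mul_mul_conjTranspose_same
  refine Matrix.posSemidef_diagonal_iff.mpr fun i => ?_
  simpa using Complex.zero_le_real.mpr (hf i)

lemma cdiag_trace : (cdiag hA f).trace = ∑ i, (f i : ℂ) := by
  have h1 : (star hA.eigenvectorUnitary : Matrix n n ℂ) * hA.eigenvectorUnitary.1 = 1 :=
    (Matrix.mem_unitaryGroup_iff').mp hA.eigenvectorUnitary.2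
  rw [cdiag, Matrix.trace_mul_cycle, h1, one_mul, Matrix.trace_diagonal]
  simp

lemma _root_.Matrix.PosSemidef.sqrt_mul_self {R : Matrix n n ℂ} (hR : R.PosSemidef) :
    hR.sqrt * hR.sqrt = R := by
  rw [sqrt_eq_cdiag, cdiag_mul]
  conv_rhs => rw [← cdiag_eigenvalues hR.1]
  congr 1
  funext i
  simp only [Pi.mul_apply, Function.comp_apply]
  exact Real.mul_self_sqrt (hR.eigenvalues_nonneg i)

lemma _root_.Matrix.PosSemidef.posSemidef_sqrt {R : Matrix n n ℂ} (hR : R.PosSemidef) :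
    hR.sqrt.PosSemidef := by
  rw [sqrt_eq_cdiag]; exact cdiag_posSemidef _ _ fun i => Real.sqrt_nonneg _

lemma nonneg_of_cdiag_psd (h : (cdiag hA f).PosSemidef) : ∀ i, 0 ≤ f i := by
  intro i
  have h1 : (star hA.eigenvectorUnitary : Matrix n n ℂ) * hA.eigenvectorUnitary.1 = 1 :=
    (Matrix.mem_unitaryGroup_iff').mp hA.eigenvectorUnitary.2
  have h2 := h.conjTranspose_mul_mul_same (hA.eigenvectorUnitary.1)
  rw [cdiag] at h2
  rw [← Matrix.star_eq_conjTranspose] at h2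
  have h3 : (star hA.eigenvectorUnitary.1 : Matrix n n ℂ) *
      (hA.eigenvectorUnitary.1 * Matrix.diagonal ((↑) ∘ f) *
        (star hA.eigenvectorUnitary : Matrix n n ℂ)) * hA.eigenvectorUnitary.1 =
      Matrix.diagonal ((↑) ∘ f) := by
    rw [show ∀ (V U D : Matrix n n ℂ), V * (U * D * V) * U = (V * U) * D * (V * U)
      from fun V U D => by noncomm_ring, h1, one_mul, mul_one]
  rw [h3] at h2
  have := Matrix.posSemidef_diagonal_iff.mp h2 i
  simpa using Complex.zero_le_real.mp (by simpa using this)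


/-- sign function of the eigenvalues -/
noncomputable def sgnf {A : Matrix n n ℂ} (hA : A.IsHermitian) : n → ℝ :=
  fun i => if 0 ≤ hA.eigenvalues i then (1 : ℝ) else -1

lemma sgnf_mul_sgnf : sgnf hA * sgnf hA = 1 := by
  funext i
  simp only [sgnf, Pi.mul_apply, Pi.one_apply]
  split <;> norm_num

lemma sgn_mul_sgn : cdiag hA (sgnf hA) * cdiag hA (sgnf hA) = 1 := by
  rw [cdiag_mul, sgnf_mul_sgnf, cdiag_one]

lemma traceNorm_eq_sum_abs : traceNorm A = ∑ i, |hA.eigenvalues i| := by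
  rw [traceNorm, dif_pos hA]

lemma trace_mul_sgn : (A * cdiag hA (sgnf hA)).trace = ((traceNorm A : ℝ) : ℂ) := by
  have hstep : (A * cdiag hA (sgnf hA)).trace
      = (cdiag hA hA.eigenvalues * cdiag hA (sgnf hA)).trace := by
    rw [cdiag_eigenvalues hA]
  rw [hstep, cdiag_mul, cdiag_trace, traceNorm_eq_sum_abs hA]
  push_cast
  refine Finset.sum_congr rfl fun i _ => ?_
  have : hA.eigenvalues i * sgnf hA i = |hA.eigenvalues i| := by
    simp only [sgnf, Pi.mul_apply]
    rcases le_or_gt 0 (hA.eigenvalues i) with h | h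
    · rw [if_pos h, mul_one, abs_of_nonneg h]
    · rw [if_neg (not_le.mpr h), abs_of_neg h]; ring
  rw [Pi.mul_apply, this]

lemma one_sub_sgn_psd : (1 - cdiag hA (sgnf hA)).PosSemidef := by
  rw [← cdiag_one hA, cdiag_sub]
  refine cdiag_posSemidef hA _ fun i => ?_
  simp only [Pi.sub_apply, Pi.one_apply, sgnf]
  split <;> norm_num

lemma one_add_sgn_psd : (1 + cdiag hA (sgnf hA)).PosSemidef := by
  rw [← cdiag_one hA, cdiag_add]
  refine cdiag_posSemidef hA _ fun i => ?_
  simp only [Pi.add_apply, Pi.one_apply, sgnf]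
  split <;> norm_num

lemma trace_mul_psd_nonneg {P X : Matrix n n ℂ} (hP : P.PosSemidef) (hX : X.PosSemidef) :
    0 ≤ (P * X).trace := by
  have h1 : (P * X).trace = (hP.sqrt * X * hP.sqrt).trace := by
    conv_lhs => rw [← hP.sqrt_mul_self]
    rw [mul_assoc, Matrix.trace_mul_comm]
  rw [h1]
  have h2 := hX.mul_mul_conjTranspose_same hP.sqrt
  rw [hP.posSemidef_sqrt.1] at h2
  exact trace_nonneg' h2

lemma trace_re_le_of_psd_sub {P X : Matrix n n ℂ} (hP : P.PosSemidef) (hX : X.PosSemidef)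
    (h : (X - P).PosSemidef) : P.trace.re ≤ X.trace.re := by
  have := trace_nonneg' h
  rw [Matrix.trace_sub] at this
  have := (Complex.le_def.mp this).1
  simp only [Complex.zero_re, Complex.sub_re] at this
  linarith

/-- key bound : trace norm of a difference of PSD matrices -/
lemma traceNorm_sub_le_psd {P Q : Matrix n n ℂ} (hP : P.PosSemidef) (hQ : Q.PosSemidef) :
    traceNorm (P - Q) ≤ P.trace.re + Q.trace.re := by
  have hH : (P - Q).IsHermitian := hP.1.sub hQ.1
  set S := cdiag hH (sgnf hH) with hS
  have h0 : traceNorm (P - Q) = (((P - Q) * S).trace).re := by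
    rw [trace_mul_sgn hH, Complex.ofReal_re]
  have h1 : ((P - Q) * S).trace = (P * S).trace - (Q * S).trace := by
    rw [Matrix.sub_mul, Matrix.trace_sub]
  have h2 : (P * S).trace.re ≤ P.trace.re := by
    have hp := trace_mul_psd_nonneg hP (one_sub_sgn_psd hH)
    rw [Matrix.mul_sub, mul_one, Matrix.trace_sub] at hp
    have := (Complex.le_def.mp hp).1
    simp only [Complex.zero_re, Complex.sub_re] at this
    linarith
  have h3 : -(Q.trace.re) ≤ (Q * S).trace.re := by
    have hp := trace_mul_psd_nonneg hQ (one_add_sgn_psd hH)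
    rw [Matrix.mul_add, mul_one, Matrix.trace_add] at hp
    have := (Complex.le_def.mp hp).1
    simp only [Complex.zero_re, Complex.add_re] at this
    linarith
  rw [h0, h1, Complex.sub_re]
  linarith

lemma traceNorm_neg_psd_le {Q : Matrix n n ℂ} (hQ : Q.PosSemidef) :
    traceNorm (-Q) ≤ Q.trace.re := by
  have := traceNorm_sub_le_psd (Matrix.PosSemidef.zero (n := n) (R := ℂ)) hQ
  simpa using this

noncomputable def posf {A : Matrix n n ℂ} (hA : A.IsHermitian) : n → ℝ :=
  fun i => max (hA.eigenvalues i) 0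

noncomputable def negf {A : Matrix n n ℂ} (hA : A.IsHermitian) : n → ℝ :=
  fun i => max (-hA.eigenvalues i) 0

lemma posf_psd : (cdiag hA (posf hA)).PosSemidef :=
  cdiag_posSemidef hA _ fun i => le_max_right _ _

lemma negf_psd : (cdiag hA (negf hA)).PosSemidef :=
  cdiag_posSemidef hA _ fun i => le_max_right _ _

lemma pos_sub_neg : cdiag hA (posf hA) - cdiag hA (negf hA) = A := by
  rw [cdiag_sub]
  have : posf hA - negf hA = hA.eigenvalues := by
    funext i
    simp only [posf, negf, Pi.sub_apply]
    exact max_zero_sub_max_neg_zero_eq_self _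
  rw [this, cdiag_eigenvalues]

lemma trace_pos_add_neg :
    (cdiag hA (posf hA)).trace.re + (cdiag hA (negf hA)).trace.re = traceNorm A := by
  rw [cdiag_trace, cdiag_trace, traceNorm_eq_sum_abs hA]
  push_cast
  simp only [Complex.re_sum, Complex.ofReal_re]
  rw [← Finset.sum_add_distrib]
  refine Finset.sum_congr rfl fun i _ => ?_
  simp only [posf, negf]
  rcases le_or_gt 0 (hA.eigenvalues i) with h | h
  · rw [max_eq_left h, max_eq_right (by linarith), abs_of_nonneg h]; ring
  · rw [max_eq_right h.le, max_eq_left (by linarith), abs_of_neg h]; ring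

lemma traceNorm_add_le {A B : Matrix n n ℂ} (hA : A.IsHermitian) (hB : B.IsHermitian) :
    traceNorm (A + B) ≤ traceNorm A + traceNorm B := by
  have hsum : A + B = (cdiag hA (posf hA) + cdiag hB (posf hB)) -
      (cdiag hA (negf hA) + cdiag hB (negf hB)) := by
    rw [← sub_add_sub_comm, pos_sub_neg, pos_sub_neg]
  rw [hsum]
  have h := traceNorm_sub_le_psd ((posf_psd hA).add (posf_psd hB)) ((negf_psd hA).add (negf_psd hB))
  refine h.trans (le_of_eq ?_)
  rw [Matrix.trace_add, Matrix.trace_add, Complex.add_re, Complex.add_re]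
  rw [← trace_pos_add_neg hA, ← trace_pos_add_neg hB]
  ring

lemma traceNorm_psd_eq {P : Matrix n n ℂ} (hP : P.PosSemidef) :
    traceNorm P = P.trace.re := by
  rw [traceNorm_eq_sum_abs hP.1]
  have hstep : P.trace = (cdiag hP.1 hP.1.eigenvalues).trace := by rw [cdiag_eigenvalues hP.1]
  rw [hstep, cdiag_trace]
  push_cast
  simp only [Complex.re_sum, Complex.ofReal_re]
  exact Finset.sum_congr rfl fun i _ => abs_of_nonneg (hP.eigenvalues_nonneg i)



/-- Cauchy-Schwarz for the trace inner product -/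
lemma abs_trace_mul_le (A B : Matrix n n ℂ) :
    ‖(A * B).trace‖ ≤
      Real.sqrt ((Aᴴ * A).trace.re) * Real.sqrt ((Bᴴ * B).trace.re) := by
  have gram : ∀ X : Matrix n n ℂ,
      (Xᴴ * X).trace.re = ∑ p : n × n, ‖X p.2 p.1‖ ^ 2 := by
    intro X
    rw [Matrix.trace, Complex.re_sum, Fintype.sum_prod_type]
    refine Finset.sum_congr rfl fun i _ => ?_
    simp only [Matrix.diag, Matrix.mul_apply, Matrix.conjTranspose_apply, Complex.re_sum]
    refine Finset.sum_congr rfl fun j _ => ?_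
    rw [Complex.star_def, mul_comm ((starRingEnd ℂ) (X j i)) (X j i),
      Complex.mul_conj, Complex.normSq_eq_norm_sq]
    rw [Complex.ofReal_re]
  have hswap : ∑ p : n × n, ‖B p.2 p.1‖ ^ 2
      = ∑ p : n × n, ‖B p.1 p.2‖ ^ 2 :=
    Fintype.sum_equiv (Equiv.prodComm n n) _ _ (fun p => rfl)
  have hAB : (A * B).trace = ∑ p : n × n, A p.2 p.1 * B p.1 p.2 := by
    rw [Matrix.trace, Fintype.sum_prod_type, Finset.sum_comm]
    exact Finset.sum_congr rfl fun i _ => by simp [Matrix.diag, Matrix.mul_apply]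
  rw [hAB, gram A, gram B, hswap]
  calc ‖∑ p : n × n, A p.2 p.1 * B p.1 p.2‖
      ≤ ∑ p : n × n, ‖A p.2 p.1 * B p.1 p.2‖ :=
        norm_sum_le _ _
    _ = ∑ p : n × n, ‖A p.2 p.1‖ * ‖B p.1 p.2‖ :=
        Finset.sum_congr rfl fun p _ => norm_mul _ _
    _ ≤ Real.sqrt (∑ p : n × n, ‖A p.2 p.1‖ ^ 2) *
        Real.sqrt (∑ p : n × n, ‖B p.1 p.2‖ ^ 2) := by
        have h := Finset.sum_mul_sq_le_sq_mul_sq Finset.univ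
          (fun p : n × n => ‖A p.2 p.1‖) (fun p : n × n => ‖B p.1 p.2‖)
        have h2 : 0 ≤ ∑ p : n × n, ‖A p.2 p.1‖ * ‖B p.1 p.2‖ :=
          Finset.sum_nonneg fun p _ => mul_nonneg (norm_nonneg _) (norm_nonneg _)
        have h3 := Real.sqrt_le_sqrt h
        rw [Real.sqrt_sq h2, Real.sqrt_mul (Finset.sum_nonneg fun p _ => sq_nonneg _)] at h3
        exact h3

/-- Cauchy-Schwarz through the square root of a PSD matrix -/
lemma cs_through_sqrt {ρ : Matrix n n ℂ} (hρ : ρ.PosSemidef) (X Y : Matrix n n ℂ) :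
    ‖(ρ * (X * Y)).trace‖ ≤
      Real.sqrt ((ρ * (X * Xᴴ)).trace.re) * Real.sqrt ((ρ * (Yᴴ * Y)).trace.re) := by
  set W := hρ.sqrt with hW
  have hWh : Wᴴ = W := hρ.posSemidef_sqrt.1
  have hWW : W * W = ρ := hρ.sqrt_mul_self
  have h := abs_trace_mul_le (W * X) (Y * W)
  have e1 : ((W * X) * (Y * W)).trace = (ρ * (X * Y)).trace := by
    rw [show (W * X) * (Y * W) = W * (X * (Y * W)) from by noncomm_ring,
      Matrix.trace_mul_comm W (X * (Y * W)),
      show X * (Y * W) * W = X * Y * (W * W) from by noncomm_ring, hWW,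
      Matrix.trace_mul_comm]
  have e2 : ((W * X)ᴴ * (W * X)).trace = (ρ * (X * Xᴴ)).trace := by
    rw [Matrix.conjTranspose_mul, hWh,
      show Xᴴ * W * (W * X) = Xᴴ * (W * W * X) from by noncomm_ring, hWW,
      Matrix.trace_mul_comm,
      show ρ * X * Xᴴ = ρ * (X * Xᴴ) from by noncomm_ring]
  have e3 : ((Y * W)ᴴ * (Y * W)).trace = (ρ * (Yᴴ * Y)).trace := by
    rw [Matrix.conjTranspose_mul, hWh,
      show W * Yᴴ * (Y * W) = W * (Yᴴ * Y * W) from by noncomm_ring,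
      Matrix.trace_mul_comm W (Yᴴ * Y * W),
      show Yᴴ * Y * W * W = Yᴴ * Y * (W * W) from by noncomm_ring, hWW,
      Matrix.trace_mul_comm]
  rw [e1, e2, e3] at h
  exact h

lemma smul_psd {P : Matrix n n ℂ} (hP : P.PosSemidef) {c : ℝ} (hc : 0 ≤ c) :
    (((c : ℝ) : ℂ) • P).PosSemidef := by
  exact hP.smul (Complex.zero_le_real.mpr hc)

section Kraus

variable {m' J : Type*} [Fintype m'] [DecidableEq m'] [Fintype J]

lemma krausMap_sub (E : J → Matrix m' n ℂ) (X Y : Matrix n n ℂ) :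
    krausMap E (X - Y) = krausMap E X - krausMap E Y := by
  simp [krausMap, Matrix.mul_sub, Matrix.sub_mul, Finset.sum_sub_distrib]

lemma krausMap_posSemidef (E : J → Matrix m' n ℂ) {X : Matrix n n ℂ} (hX : X.PosSemidef) :
    (krausMap E X).PosSemidef := by
  rw [krausMap]
  refine Finset.sum_induction _ _ (fun a b ha hb => ha.add hb) Matrix.PosSemidef.zero ?_
  exact fun j _ => hX.mul_mul_conjTranspose_same (E j)

lemma krausMap_trace (E : J → Matrix m' n ℂ) (hE : ∑ j, (E j)ᴴ * E j = 1)
    (X : Matrix n n ℂ) : (krausMap E X).trace = X.trace := by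
  rw [krausMap, Matrix.trace_sum]
  have h1 : ∀ j, (E j * X * (E j)ᴴ).trace = (X * ((E j)ᴴ * E j)).trace := by
    intro j
    rw [Matrix.trace_mul_cycle, Matrix.trace_mul_comm]
  rw [Finset.sum_congr rfl fun j _ => h1 j, ← Matrix.trace_sum, ← Matrix.mul_sum, hE, mul_one]

lemma krausMap_traceNorm_le (E : J → Matrix m' n ℂ) (hE : ∑ j, (E j)ᴴ * E j = 1)
    {X : Matrix n n ℂ} (hX : X.IsHermitian) :
    traceNorm (krausMap E X) ≤ traceNorm X := by
  have hd : krausMap E X = krausMap E (cdiag hX (posf hX)) - krausMap E (cdiag hX (negf hX)) := by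
    rw [← krausMap_sub, pos_sub_neg]
  rw [hd]
  have h := traceNorm_sub_le_psd (krausMap_posSemidef E (posf_psd hX))
    (krausMap_posSemidef E (negf_psd hX))
  rw [krausMap_trace E hE, krausMap_trace E hE] at h
  rw [← trace_pos_add_neg hX]
  exact h

end Kraus



lemma cdiag_congr {A : Matrix n n ℂ} (hA : A.IsHermitian) {f g : n → ℝ} (h : f = g) :
    cdiag hA f = cdiag hA g := by rw [h]

lemma trace_MρM {ρ Rm : Matrix n n ℂ} (hρ : ρ.PosSemidef) (hRm : Rm.PosSemidef) :
    (hRm.sqrt * ρ * hRm.sqrt).trace = (ρ * Rm).trace := by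
  rw [Matrix.trace_mul_cycle, hRm.sqrt_mul_self, Matrix.trace_mul_comm]

lemma MρM_psd {ρ Rm : Matrix n n ℂ} (hρ : ρ.PosSemidef) (hRm : Rm.PosSemidef) :
    (hRm.sqrt * ρ * hRm.sqrt).PosSemidef := by
  have h := hρ.mul_mul_conjTranspose_same hRm.sqrt
  rwa [hRm.posSemidef_sqrt.1] at h

/-- The gentle measurement step bound. -/
lemma gentle {ρ Rm : Matrix n n ℂ} (hρ : ρ.PosSemidef) (hρtr : ρ.trace.re ≤ 1)
    (hRm : Rm.PosSemidef) (hR1 : ((1 : Matrix n n ℂ) - Rm).PosSemidef) {ε : ℝ} (hε : 0 < ε)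
    (hfid : 1 - 3 * ε ≤ ((ρ * Rm).trace).re) :
    traceNorm (ρ - ((ρ * Rm).trace)⁻¹ • (hRm.sqrt * ρ * hRm.sqrt))
      ≤ Real.sqrt (24 * ε) + 6 * ε := by
  have hMρM : (hRm.sqrt * ρ * hRm.sqrt).PosSemidef := MρM_psd hρ hRm
  set M := hRm.sqrt with hMdef
  set p := (ρ * Rm).trace with hpdef
  have hp0 : 0 ≤ p := trace_mul_psd_nonneg hρ hRm
  have hpim : p.im = 0 := by
    have := (Complex.le_def.mp hp0).2
    simpa using this.symm
  have hpre : p = ((p.re : ℝ) : ℂ) := Complex.ext (by simp) (by simp [hpim])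
  have hpr0 : (0:ℝ) ≤ p.re := by simpa using (Complex.le_def.mp hp0).1
  have htrρ0 : (0:ℝ) ≤ ρ.trace.re := by
    have h := trace_nonneg' hρ
    simpa using (Complex.le_def.mp h).1
  have hpr_le : p.re ≤ ρ.trace.re := by
    have h := trace_mul_psd_nonneg hρ hR1
    rw [Matrix.mul_sub, mul_one, Matrix.trace_sub] at h
    have h2 := (Complex.le_def.mp h).1
    simp only [Complex.zero_re, Complex.sub_re] at h2
    rw [hpdef]
    linarith
  have hpr1 : p.re ≤ 1 := hpr_le.trans hρtr
  have hcinv : p⁻¹ = ((p.re⁻¹ : ℝ) : ℂ) := by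
    conv_lhs => rw [hpre]
    rw [← Complex.ofReal_inv]
  -- eigenvalue facts
  set lam := hRm.1.eigenvalues with hlamdef
  have hlam0 : ∀ i, 0 ≤ lam i := hRm.eigenvalues_nonneg
  have hRmeq : cdiag hRm.1 lam = Rm := cdiag_eigenvalues hRm.1
  have h1R : cdiag hRm.1 (fun i => 1 - lam i) = (1 : Matrix n n ℂ) - Rm := by
    calc cdiag hRm.1 (fun i => 1 - lam i)
        = cdiag hRm.1 ((1 : n → ℝ) - lam) := cdiag_congr _ (by funext i; simp)
      _ = cdiag hRm.1 1 - cdiag hRm.1 lam := (cdiag_sub hRm.1 1 lam).symm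
      _ = 1 - Rm := by rw [cdiag_one, hRmeq]
  have hlam1 : ∀ i, lam i ≤ 1 := by
    intro i
    have h := nonneg_of_cdiag_psd hRm.1 (fun i => 1 - lam i) (h1R.symm ▸ hR1) i
    linarith
  have hMeq : M = cdiag hRm.1 (Real.sqrt ∘ lam) := sqrt_eq_cdiag hRm
  have hNeq : cdiag hRm.1 (fun i => 1 - Real.sqrt (lam i)) = (1 : Matrix n n ℂ) - M := by
    calc cdiag hRm.1 (fun i => 1 - Real.sqrt (lam i))
        = cdiag hRm.1 ((1 : n → ℝ) - Real.sqrt ∘ lam) :=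
          cdiag_congr _ (by funext i; simp [Function.comp])
      _ = cdiag hRm.1 1 - cdiag hRm.1 (Real.sqrt ∘ lam) :=
          (cdiag_sub hRm.1 1 (Real.sqrt ∘ lam)).symm
      _ = 1 - M := by rw [cdiag_one, ← hMeq]
  -- Key A : the squared defect bound
  have hNN : ((1:Matrix n n ℂ) - M) * ((1:Matrix n n ℂ) - M)
      = cdiag hRm.1 (fun i => (1 - Real.sqrt (lam i)) * (1 - Real.sqrt (lam i))) := by
    rw [← hNeq, cdiag_mul]
    exact cdiag_congr _ (by funext i; simp)
  have hNNpsd : (((1:Matrix n n ℂ) - M) * ((1:Matrix n n ℂ) - M)).PosSemidef := by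
    rw [hNN]
    refine cdiag_posSemidef _ _ fun i => mul_nonneg ?_ ?_ <;>
      · rw [sub_nonneg]; exact Real.sqrt_le_one.mpr (hlam1 i)
  -- Key A : the defect matrix is PSD
  have hDm_psd : ((((1:Matrix n n ℂ) - Rm) + ((1:Matrix n n ℂ) - Rm))
      - ((1 - M) * (1 - M))).PosSemidef := by
    rw [hNN, ← h1R, cdiag_add, cdiag_sub]
    refine cdiag_posSemidef _ _ fun i => ?_
    have h1 := Real.sq_sqrt (hlam0 i)
    have h2 := Real.sqrt_nonneg (lam i)
    have h3 : Real.sqrt (lam i) ≤ 1 := Real.sqrt_le_one.mpr (hlam1 i)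
    simp only [Pi.sub_apply, Pi.add_apply]
    nlinarith [h1, h2, h3]
  have hKeyA : (ρ * ((1 - M) * (1 - M))).trace.re ≤ 2 * (ρ.trace.re - p.re) := by
    have h := trace_mul_psd_nonneg hρ hDm_psd
    have hTr : (ρ * ((((1:Matrix n n ℂ) - Rm) + ((1:Matrix n n ℂ) - Rm))
        - ((1 - M) * (1 - M)))).trace
        = ((ρ.trace - p) + (ρ.trace - p)) - (ρ * ((1 - M) * (1 - M))).trace := by
      simp only [Matrix.mul_add, Matrix.mul_sub, Matrix.mul_one, Matrix.trace_add,
        Matrix.trace_sub, ← hpdef]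
    rw [hTr] at h
    have h2 := (Complex.le_def.mp h).1
    simp only [Complex.zero_re, Complex.add_re, Complex.sub_re] at h2
    linarith
  -- Key B : trace-norm of the unnormalized defect
  set C := ρ - M * ρ * M with hCdef
  have hCh : C.IsHermitian := hρ.1.sub hMρM.1
  set S := cdiag hCh (sgnf hCh) with hSdef
  have hSS : S * S = 1 := sgn_mul_sgn hCh
  have hSh : Sᴴ = S := cdiag_conjTranspose hCh (sgnf hCh)
  have h1Mh : ((1:Matrix n n ℂ) - M)ᴴ = 1 - M := by
    rw [Matrix.conjTranspose_sub, Matrix.conjTranspose_one, hRm.posSemidef_sqrt.1]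
  have hsplit : (C * S).trace
      = (ρ * ((1 - M) * S)).trace + (ρ * ((M * S) * (1 - M))).trace := by
    rw [hCdef, Matrix.sub_mul, Matrix.trace_sub,
      show M * ρ * M * S = M * (ρ * M * S) from by noncomm_ring,
      Matrix.trace_mul_comm M (ρ * M * S),
      ← Matrix.trace_sub, ← Matrix.trace_add]
    congr 1
    noncomm_ring
  have hterm1 := cs_through_sqrt hρ (1 - M) S
  rw [h1Mh, hSh, hSS, Matrix.mul_one] at hterm1
  have hterm2 := cs_through_sqrt hρ (M * S) (1 - M)
  have hXXh : (M * S) * (M * S)ᴴ = Rm := by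
    rw [Matrix.conjTranspose_mul, hSh, hRm.posSemidef_sqrt.1,
      show M * S * (S * M) = M * (S * S) * M from by noncomm_ring, hSS, mul_one,
      hRm.sqrt_mul_self]
  rw [hXXh, h1Mh, ← hpdef] at hterm2
  set u := (ρ * ((1 - M) * (1 - M))).trace.re with hudef
  have hu0 : (0:ℝ) ≤ u := by
    have h := trace_mul_psd_nonneg hρ hNNpsd
    simpa [hudef] using (Complex.le_def.mp h).1
  have hu6 : u ≤ 6 * ε := by
    have : 2 * (ρ.trace.re - p.re) ≤ 6 * ε := by linarith
    linarith [hKeyA]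
  have htnC : traceNorm C = ((C * S).trace).re := by
    rw [hSdef, trace_mul_sgn hCh, Complex.ofReal_re]
  have h24 : Real.sqrt (24 * ε) = Real.sqrt (6 * ε) + Real.sqrt (6 * ε) := by
    rw [show (24:ℝ) * ε = 4 * (6 * ε) from by ring,
      Real.sqrt_mul (by norm_num : (0:ℝ) ≤ 4),
      show Real.sqrt 4 = 2 from by
        rw [show (4:ℝ) = 2 ^ 2 from by norm_num, Real.sqrt_sq (by norm_num : (0:ℝ) ≤ 2)]]
    ring
  have hCbound : traceNorm C ≤ Real.sqrt (24 * ε) := by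
    have h1 : traceNorm C ≤ ‖(C * S).trace‖ := by
      rw [htnC]; exact Complex.re_le_norm _
    have h2 : ‖(C * S).trace‖
        ≤ ‖(ρ * ((1 - M) * S)).trace‖
          + ‖(ρ * ((M * S) * (1 - M))).trace‖ := by
      rw [hsplit]; exact norm_add_le _ _
    have h3 : Real.sqrt u * Real.sqrt (ρ.trace.re) ≤ Real.sqrt (6 * ε) * 1 :=
      mul_le_mul (Real.sqrt_le_sqrt hu6) (Real.sqrt_le_one.mpr hρtr)
        (Real.sqrt_nonneg _) (Real.sqrt_nonneg _)
    have h4 : Real.sqrt p.re * Real.sqrt u ≤ 1 * Real.sqrt (6 * ε) :=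
      mul_le_mul (Real.sqrt_le_one.mpr hpr1) (Real.sqrt_le_sqrt hu6)
        (Real.sqrt_nonneg _) (by norm_num)
    rw [h24]
    linarith [hterm1, hterm2]
  -- final assembly
  by_cases hcase : ε < 1/3
  · have hprpos : 0 < p.re := by linarith
    have hinv1 : 1 ≤ p.re⁻¹ := by
      have h := mul_inv_cancel₀ (ne_of_gt hprpos)
      nlinarith [inv_nonneg.mpr hpr0]
    have hBdec : M * ρ * M - p⁻¹ • (M * ρ * M)
        = -((((p.re⁻¹ - 1 : ℝ)) : ℂ) • (M * ρ * M)) := by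
      rw [hcinv, Complex.ofReal_sub, Complex.ofReal_one, sub_smul, one_smul, neg_sub]
    have hBpsd := smul_psd hMρM (by linarith : (0:ℝ) ≤ p.re⁻¹ - 1)
    have hBh : (M * ρ * M - p⁻¹ • (M * ρ * M)).IsHermitian := by
      rw [hBdec]; exact hBpsd.1.neg
    have hBtr : traceNorm (M * ρ * M - p⁻¹ • (M * ρ * M)) ≤ 3 * ε := by
      rw [hBdec]
      have h := traceNorm_neg_psd_le hBpsd
      have htr : ((((p.re⁻¹ - 1 : ℝ)) : ℂ) • (M * ρ * M)).trace.re
          = (p.re⁻¹ - 1) * p.re := by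
        rw [Matrix.trace_smul, trace_MρM hρ hRm, ← hpdef, smul_eq_mul,
          Complex.re_ofReal_mul]
      rw [htr] at h
      have heq : (p.re⁻¹ - 1) * p.re = 1 - p.re := by
        field_simp
      rw [heq] at h
      linarith
    have hdecomp : ρ - p⁻¹ • (M * ρ * M) = C + (M * ρ * M - p⁻¹ • (M * ρ * M)) := by
      rw [hCdef]; abel
    rw [hdecomp]
    have htri := traceNorm_add_le hCh hBh
    linarith [hCbound, hBtr, htri]
  · push_neg at hcase
    have hXpsd : (p⁻¹ • (M * ρ * M)).PosSemidef := by
      rw [hcinv]; exact smul_psd hMρM (inv_nonneg.mpr hpr0)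
    have h := traceNorm_sub_le_psd hρ hXpsd
    have htr : (p⁻¹ • (M * ρ * M)).trace.re ≤ 1 := by
      rw [hcinv, Matrix.trace_smul, trace_MρM hρ hRm, ← hpdef, smul_eq_mul,
        Complex.re_ofReal_mul]
      rcases eq_or_lt_of_le hpr0 with h0 | h0
      · rw [← h0]; simp
      · rw [inv_mul_cancel₀ (ne_of_gt h0)]
    have h2 : traceNorm (ρ - p⁻¹ • (M * ρ * M)) ≤ 2 := by linarith
    have h6 : (2:ℝ) ≤ 6 * ε := by linarith
    linarith [Real.sqrt_nonneg (24 * ε)]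

end GentleAux

lemma main_aux (d : ℕ → ℕ) (J : ℕ → Type) [∀ s, Fintype (J s)]
    (E : ∀ s, J s → Matrix (Fin (d (s + 1))) (Fin (d s)) ℂ)
    (R : ∀ s, Matrix (Fin (d s)) (Fin (d s)) ℂ)
    (hR : ∀ s, (R s).PosSemidef)
    (ρ0 : Matrix (Fin (d 0)) (Fin (d 0)) ℂ)
    (hρ0 : ρ0.PosSemidef) (hρ0tr : ρ0.trace = 1) (ε : ℕ → ℝ) :
    ∀ t, (∀ s < t, ∑ j, (E s j)ᴴ * E s j = 1) → (∀ s < t, loewnerLE (R s) 1) →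
      (∀ s < t, 0 < ε s) →
      (∀ s < t, 1 - 3 * ε s ≤ ((rhoSeq d J E R hR ρ0 s * R s).trace).re) →
      (rhoSeq d J E R hR ρ0 t).PosSemidef ∧ (rhoSeq d J E R hR ρ0 t).trace.re ≤ 1 ∧
      (sigmaSeq d J E ρ0 t).PosSemidef ∧
      traceNorm (sigmaSeq d J E ρ0 t - rhoSeq d J E R hR ρ0 t)
        ≤ ∑ s ∈ Finset.range t, (Real.sqrt (24 * ε s) + 6 * ε s) := by
  intro t
  induction t with
  | zero =>
      intro _ _ _ _
      refine ⟨hρ0, by rw [show rhoSeq d J E R hR ρ0 0 = ρ0 from rfl, hρ0tr]; norm_num, hρ0, ?_⟩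
      show traceNorm (ρ0 - ρ0) ≤ _
      rw [sub_self]
      have h0 : traceNorm (0 : Matrix (Fin (d 0)) (Fin (d 0)) ℂ) = 0 := by
        rw [GentleAux.traceNorm_psd_eq Matrix.PosSemidef.zero]; simp
      simp [h0]
  | succ t ih =>
      intro hE hR1 hε hfid
      obtain ⟨hρpsd, hρtr, hσpsd, hnorm⟩ := ih
        (fun s hs => hE s (hs.trans (Nat.lt_succ_self t)))
        (fun s hs => hR1 s (hs.trans (Nat.lt_succ_self t)))
        (fun s hs => hε s (hs.trans (Nat.lt_succ_self t)))
        (fun s hs => hfid s (hs.trans (Nat.lt_succ_self t)))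
      set ρ := rhoSeq d J E R hR ρ0 t with hρdef
      set σ := sigmaSeq d J E ρ0 t with hσdef
      set M := (hR t).sqrt with hMdef
      set p := (ρ * R t).trace with hpdef
      have hEt := hE t (Nat.lt_succ_self t)
      have hR1t : ((1 : Matrix (Fin (d t)) (Fin (d t)) ℂ) - R t).PosSemidef :=
        hR1 t (Nat.lt_succ_self t)
      have hεt := hε t (Nat.lt_succ_self t)
      have hfidt := hfid t (Nat.lt_succ_self t)
      have hMρM : (M * ρ * M).PosSemidef := GentleAux.MρM_psd hρpsd (hR t)
      have hρsucc : rhoSeq d J E R hR ρ0 (t + 1) = krausMap (E t) (p⁻¹ • (M * ρ * M)) := rfl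
      have hσsucc : sigmaSeq d J E ρ0 (t + 1) = krausMap (E t) σ := rfl
      have hgentle := GentleAux.gentle hρpsd hρtr (hR t) hR1t hεt hfidt
      have hp0 : 0 ≤ p := GentleAux.trace_mul_psd_nonneg hρpsd (hR t)
      have hpim : p.im = 0 := by simpa using ((Complex.le_def.mp hp0).2).symm
      have hpr0 : 0 ≤ p.re := by simpa using (Complex.le_def.mp hp0).1
      have hcinv : p⁻¹ = ((p.re⁻¹ : ℝ) : ℂ) := by
        conv_lhs => rw [show p = ((p.re : ℝ) : ℂ) from Complex.ext (by simp) (by simp [hpim])]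
        rw [← Complex.ofReal_inv]
      have hXpsd : (p⁻¹ • (M * ρ * M)).PosSemidef := by
        rw [hcinv]; exact GentleAux.smul_psd hMρM (inv_nonneg.mpr hpr0)
      refine ⟨?_, ?_, ?_, ?_⟩
      · rw [hρsucc]; exact GentleAux.krausMap_posSemidef _ hXpsd
      · rw [hρsucc, GentleAux.krausMap_trace _ hEt,
          Matrix.trace_smul, GentleAux.trace_MρM hρpsd (hR t), ← hpdef, hcinv,
          smul_eq_mul, Complex.re_ofReal_mul]
        rcases eq_or_lt_of_le hpr0 with h0 | h0
        · rw [← h0]; simp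
        · rw [inv_mul_cancel₀ (ne_of_gt h0)]
      · rw [hσsucc]; exact GentleAux.krausMap_posSemidef _ hσpsd
      · rw [hσsucc, hρsucc, ← GentleAux.krausMap_sub]
        have hsplit : σ - p⁻¹ • (M * ρ * M) = (σ - ρ) + (ρ - p⁻¹ • (M * ρ * M)) := by abel
        rw [hsplit]
        have hherm1 : (σ - ρ).IsHermitian := hσpsd.1.sub hρpsd.1
        have hherm2 : (ρ - p⁻¹ • (M * ρ * M)).IsHermitian := hρpsd.1.sub hXpsd.1
        have hkr := GentleAux.krausMap_traceNorm_le (E t) hEt (hherm1.add hherm2)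
        have htri := GentleAux.traceNorm_add_le hherm1 hherm2
        rw [Finset.sum_range_succ]
        linarith [hnorm, hgentle]

/-- Iterated gentle measurement: after `t` rounds of trace-preserving Kraus maps
interleaved with measurements `R_s` with `0 ≤ R_s ≤ I` and `tr(ρ_{s-1} R_s) ≥ 1 − 3ε_s`,
the measured and unmeasured states satisfy `‖σ_t − ρ_t‖₁ ≤ ∑_{s=1}^t (√(24ε_s) + 6ε_s)`. -/
theorem stmt_3 (t : ℕ) (d : ℕ → ℕ) (J : ℕ → Type) [∀ s, Fintype (J s)]
    (E : ∀ s, J s → Matrix (Fin (d (s + 1))) (Fin (d s)) ℂ)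
    (hE : ∀ s < t, ∑ j, (E s j)ᴴ * E s j = 1)
    (R : ∀ s, Matrix (Fin (d s)) (Fin (d s)) ℂ)
    (hR : ∀ s, (R s).PosSemidef) (hR1 : ∀ s < t, loewnerLE (R s) 1)
    (ρ0 : Matrix (Fin (d 0)) (Fin (d 0)) ℂ)
    (hρ0 : ρ0.PosSemidef) (hρ0tr : ρ0.trace = 1)
    (ε : ℕ → ℝ) (hε : ∀ s < t, 0 < ε s)
    (hfid : ∀ s < t, 1 - 3 * ε s ≤ ((rhoSeq d J E R hR ρ0 s * R s).trace).re) :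
    traceNorm (sigmaSeq d J E ρ0 t - rhoSeq d J E R hR ρ0 t) ≤
      ∑ s ∈ Finset.range t, (Real.sqrt (24 * ε s) + 6 * ε s) :=
  (main_aux d J E R hR ρ0 hρ0 hρ0tr ε t hE hR1 hε hfid).2.2.2
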